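/- Let B be an n×n real symmetric positive semi-definite matrix with rank(B) ≥ n−1, partitioned as B = [[B11, b],[b^T, β]] with B11 of order n−1. Suppose B11 = C11 + C12 where C11 is symmetric positive definite with λ_min(C11) > β, and C12 is symmetric positive semi-definite. Then λ_min(B) ≥ β − b^T C11^{−1} b − β·‖C11^{−1} b‖₂² / (1 − β·‖C11^{−1}‖₂). -/

import Mathlib

open Matrix

/-- Spectral (L2 operator) norm of a real matrix. -/
noncomputable def specNorm {ι κ : Type*} [Fintype ι] [Fintype κ] [DecidableEq κ]
    (A : Matrix ι κ ℝ) : ℝ :=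
  ‖LinearMap.toContinuousLinearMap
      (Matrix.toEuclideanLin A : EuclideanSpace ℝ κ →ₗ[ℝ] EuclideanSpace ℝ ι)‖

/-- Euclidean norm of a real vector. -/
noncomputable def enorm' {ι : Type*} [Fintype ι] (v : ι → ℝ) : ℝ :=
  Real.sqrt (∑ i, v i ^ 2)

/-- The `j`-th largest eigenvalue (1-indexed, non-increasing order), realized as the
`j`-th largest root (with multiplicity) of the characteristic polynomial. -/
noncomputable def eigvalDesc {ι : Type*} [Fintype ι] [DecidableEq ι]
    (A : Matrix ι ι ℝ) (j : ℕ) : ℝ :=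
  (A.charpoly.roots.sort (· ≤ ·)).getD (Fintype.card ι - j) 0

/-- The smallest eigenvalue. -/
noncomputable def lmin {ι : Type*} [Fintype ι] [DecidableEq ι] (A : Matrix ι ι ℝ) : ℝ :=
  eigvalDesc A (Fintype.card ι)

/-- The `j`-th largest singular value (1-indexed, non-increasing order). -/
noncomputable def singvalDesc {ι κ : Type*} [Fintype ι] [Fintype κ] [DecidableEq κ]
    (A : Matrix ι κ ℝ) (j : ℕ) : ℝ :=
  Real.sqrt (eigvalDesc (Aᵀ * A) j)

/-- The smallest singular value. -/
noncomputable def smin {ι κ : Type*} [Fintype ι] [Fintype κ] [DecidableEq κ]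
    (A : Matrix ι κ ℝ) : ℝ :=
  Real.sqrt (lmin (Aᵀ * A))


/-!
By the Rayleigh characterisation of `lmin`, it suffices to show `μ ‖x‖² ≤ xᵀ B x` for the claimed
bound `μ`. Write `x = (y, t)`, `c = C11⁻¹ b` and `z = y + t c`. Since `C12` is positive semidefinite
and `C11 c = b`, `xᵀ B x ≥ zᵀ C11 z + (β - bᵀc) t² ≥ λ ‖z‖² + (β - bᵀc) t²` with
`λ = lmin C11 = 1 / ‖C11⁻¹‖₂`. On the other side `‖x‖² = ‖z - t c‖² + t²`, and the weighted Young
inequality `μ ‖z - u‖² ≤ λ ‖z‖² + μλ/(λ - μ) ‖u‖²` (valid for `μ < λ`; here `μ ≤ β < λ`) closes the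
gap, because `μλ/(λ - μ)` is increasing in `μ` and `μ = β - bᵀc - βλ/(λ - β) ‖c‖²`.
-/

namespace List

variable {α : Type*}

lemma Pairwise.getD_zero_le [Preorder α] {l : List α} (hl : l.Pairwise (· ≤ ·)) {x : α}
    (hx : x ∈ l) (d : α) : l.getD 0 d ≤ x := by
  cases l with
  | nil => simp at hx
  | cons a l =>
    rcases mem_cons.mp hx with rfl | hx
    · simp
    · exact (pairwise_cons.mp hl).1 x hx

lemma getD_zero_mem {l : List α} (hl : l ≠ []) (d : α) : l.getD 0 d ∈ l := by
  cases l with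
  | nil => contradiction
  | cons a l => simp

end List

lemma lmin_of_isEmpty {ι : Type*} [Fintype ι] [DecidableEq ι] [IsEmpty ι] (A : Matrix ι ι ℝ) :
    lmin A = 0 := by
  simp [lmin, eigvalDesc, charpoly_isEmpty]

namespace Matrix.IsHermitian

lemma sub_smul_one {ι : Type*} [DecidableEq ι] {A : Matrix ι ι ℝ} (hA : A.IsHermitian) (μ : ℝ) :
    (A - μ • 1).IsHermitian :=
  hA.sub (isHermitian_one.smul (IsSelfAdjoint.all μ))

variable {ι : Type*} [Fintype ι] [DecidableEq ι] {A : Matrix ι ι ℝ}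

lemma roots_charpoly_eq_eigenvalues_real (hA : A.IsHermitian) :
    A.charpoly.roots = Finset.univ.val.map hA.eigenvalues := by
  simpa using hA.roots_charpoly_eq_eigenvalues

lemma lmin_le_eigenvalues (hA : A.IsHermitian) (i : ι) : lmin A ≤ hA.eigenvalues i := by
  rw [lmin, eigvalDesc, Nat.sub_self]
  refine (Multiset.pairwise_sort _ _).getD_zero_le ?_ 0
  simp [hA.roots_charpoly_eq_eigenvalues_real]

lemma exists_eigenvalues_eq_lmin [Nonempty ι] (hA : A.IsHermitian) :
    ∃ i, hA.eigenvalues i = lmin A := by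
  have hne : A.charpoly.roots.sort (· ≤ ·) ≠ [] := by
    simp [← List.length_pos_iff, hA.roots_charpoly_eq_eigenvalues_real, Fintype.card_pos]
  simpa [lmin, eigvalDesc, hA.roots_charpoly_eq_eigenvalues_real, eq_comm] using
    List.getD_zero_mem hne 0

lemma posSemidef_sub_smul_one_iff (hA : A.IsHermitian) (μ : ℝ) :
    (A - μ • 1).PosSemidef ↔ ∀ i, μ ≤ hA.eigenvalues i := by
  rw [posSemidef_iff_isHermitian_and_spectrum_nonneg, and_iff_right (hA.sub_smul_one μ),
    ← Algebra.algebraMap_eq_smul_one, ← spectrum.sub_singleton_eq,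
    hA.spectrum_real_eq_range_eigenvalues]
  simp [Set.subset_def]

lemma posSemidef_sub_smul_one_iff_forall (hA : A.IsHermitian) (μ : ℝ) :
    (A - μ • 1).PosSemidef ↔ ∀ x, μ * (x ⬝ᵥ x) ≤ x ⬝ᵥ A *ᵥ x := by
  rw [posSemidef_iff_dotProduct_mulVec, and_iff_right (hA.sub_smul_one μ)]
  simp [sub_mulVec, dotProduct_sub, smul_mulVec, dotProduct_smul]

lemma lmin_mul_dotProduct_le (hA : A.IsHermitian) (x : ι → ℝ) :
    lmin A * (x ⬝ᵥ x) ≤ x ⬝ᵥ A *ᵥ x :=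
  (hA.posSemidef_sub_smul_one_iff_forall _).mp
    ((hA.posSemidef_sub_smul_one_iff _).mpr hA.lmin_le_eigenvalues) x

lemma le_lmin_of_forall [Nonempty ι] (hA : A.IsHermitian) {μ : ℝ}
    (h : ∀ x, μ * (x ⬝ᵥ x) ≤ x ⬝ᵥ A *ᵥ x) : μ ≤ lmin A := by
  obtain ⟨i, hi⟩ := hA.exists_eigenvalues_eq_lmin
  exact hi ▸ (hA.posSemidef_sub_smul_one_iff μ).mp
    ((hA.posSemidef_sub_smul_one_iff_forall μ).mpr h) i

end Matrix.IsHermitian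

section EuclideanNorm

variable {ι κ : Type*} [Fintype ι] [Fintype κ]

lemma norm_toLp_sq_eq_dotProduct (v : ι → ℝ) : ‖WithLp.toLp 2 v‖ ^ 2 = v ⬝ᵥ v := by
  rw [EuclideanSpace.real_norm_sq_eq]
  simp [dotProduct, sq]

lemma enorm'_eq_norm_toLp (v : ι → ℝ) : enorm' v = ‖WithLp.toLp 2 v‖ := by
  simp [enorm', EuclideanSpace.norm_eq]

lemma enorm'_nonneg (v : ι → ℝ) : 0 ≤ enorm' v := Real.sqrt_nonneg _

lemma enorm'_sq (v : ι → ℝ) : enorm' v ^ 2 = v ⬝ᵥ v := by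
  rw [enorm'_eq_norm_toLp, norm_toLp_sq_eq_dotProduct]

lemma enorm'_smul (a : ℝ) (v : ι → ℝ) : enorm' (a • v) = |a| * enorm' v := by
  simp [enorm'_eq_norm_toLp, WithLp.toLp_smul, norm_smul]

lemma dotProduct_le_enorm'_mul_enorm' (u v : ι → ℝ) : u ⬝ᵥ v ≤ enorm' u * enorm' v := by
  simpa [enorm'_eq_norm_toLp, EuclideanSpace.inner_eq_star_dotProduct, dotProduct_comm] using
    real_inner_le_norm (WithLp.toLp 2 u) (WithLp.toLp 2 v)

variable [DecidableEq κ]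

lemma enorm'_mulVec_le (A : Matrix ι κ ℝ) (v : κ → ℝ) :
    enorm' (A *ᵥ v) ≤ specNorm A * enorm' v := by
  simpa [specNorm, enorm'_eq_norm_toLp] using
    (LinearMap.toContinuousLinearMap (toEuclideanLin A)).le_opNorm (WithLp.toLp 2 v)

lemma specNorm_le_of_forall {A : Matrix ι κ ℝ} {c : ℝ} (hc : 0 ≤ c)
    (h : ∀ v, enorm' (A *ᵥ v) ≤ c * enorm' v) : specNorm A ≤ c :=
  ContinuousLinearMap.opNorm_le_bound _ hc fun v => by
    simpa [enorm'_eq_norm_toLp, toEuclideanLin, toLpLin_apply] using h v.ofLp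

variable [DecidableEq ι]

lemma Matrix.IsHermitian.lmin_mul_enorm'_le {A : Matrix ι ι ℝ} (hA : A.IsHermitian)
    (y : ι → ℝ) : lmin A * enorm' y ≤ enorm' (A *ᵥ y) := by
  have h : enorm' y * (lmin A * enorm' y) ≤ enorm' y * enorm' (A *ᵥ y) := by
    calc enorm' y * (lmin A * enorm' y) = lmin A * (y ⬝ᵥ y) := by rw [← enorm'_sq]; ring
      _ ≤ y ⬝ᵥ A *ᵥ y := hA.lmin_mul_dotProduct_le y
      _ ≤ enorm' y * enorm' (A *ᵥ y) := dotProduct_le_enorm'_mul_enorm' _ _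
  rcases (enorm'_nonneg y).eq_or_lt with h0 | hpos
  · rw [← h0, mul_zero]
    exact enorm'_nonneg _
  · exact le_of_mul_le_mul_left h hpos

lemma Matrix.PosDef.specNorm_inv {C : Matrix ι ι ℝ} (hC : C.PosDef) :
    specNorm C⁻¹ = (lmin C)⁻¹ := by
  cases isEmpty_or_nonempty ι
  · simp [specNorm, lmin_of_isEmpty, ContinuousLinearMap.opNorm_subsingleton]
  obtain ⟨i, hi⟩ := hC.1.exists_eigenvalues_eq_lmin
  have hl : 0 < lmin C := hi ▸ hC.eigenvalues_pos i
  have hdet : IsUnit C.det := isUnit_iff_ne_zero.2 hC.det_pos.ne'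
  apply le_antisymm
  · refine specNorm_le_of_forall (inv_nonneg.2 hl.le) fun v => ?_
    rw [inv_mul_eq_div, le_div_iff₀ hl, mul_comm]
    simpa [mulVec_mulVec, mul_nonsing_inv _ hdet] using hC.1.lmin_mul_enorm'_le (C⁻¹ *ᵥ v)
  · set v : ι → ℝ := ⇑(hC.1.eigenvectorBasis i)
    have hv : enorm' v = 1 := by
      simp [enorm'_eq_norm_toLp, v]
    have hCv : C *ᵥ v = lmin C • v := hi ▸ hC.1.mulVec_eigenvectorBasis i
    have hCinv : C⁻¹ *ᵥ v = (lmin C)⁻¹ • v := by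
      calc C⁻¹ *ᵥ v = (lmin C)⁻¹ • (C⁻¹ *ᵥ (lmin C • v)) := by
            rw [mulVec_smul, smul_smul, inv_mul_cancel₀ hl.ne', one_smul]
        _ = (lmin C)⁻¹ • v := by rw [← hCv, mulVec_mulVec, nonsing_inv_mul _ hdet, one_mulVec]
    simpa [hCinv, enorm'_smul, hv, abs_of_pos hl] using enorm'_mulVec_le C⁻¹ v

end EuclideanNorm

lemma mul_norm_sub_sq_le {E : Type*} [NormedAddCommGroup E] [InnerProductSpace ℝ E] {μ l : ℝ}
    (h : μ < l) (z u : E) :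
    μ * ‖z - u‖ ^ 2 ≤ l * ‖z‖ ^ 2 + μ * l / (l - μ) * ‖u‖ ^ 2 := by
  have hd : 0 < l - μ := sub_pos.2 h
  have key : (l - μ) * (l * ‖z‖ ^ 2 + μ * l / (l - μ) * ‖u‖ ^ 2 - μ * ‖z - u‖ ^ 2)
      = ‖(l - μ) • z + μ • u‖ ^ 2 := by
    rw [norm_add_sq_real, norm_sub_sq_real, norm_smul, norm_smul, real_inner_smul_left,
      real_inner_smul_right, mul_pow, mul_pow, Real.norm_eq_abs, Real.norm_eq_abs, sq_abs, sq_abs]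
    field_simp
    ring
  have := (mul_nonneg_iff_of_pos_left hd).1 (key ▸ sq_nonneg _)
  linarith

lemma mul_norm_sub_smul_sq_add_sq_le {E : Type*} [NormedAddCommGroup E] [InnerProductSpace ℝ E]
    {β l q : ℝ} (hβ : 0 ≤ β) (hβl : β < l) (hq : 0 ≤ q) (z c : E) (t : ℝ) :
    (β - q - β * l / (l - β) * ‖c‖ ^ 2) * (‖z - t • c‖ ^ 2 + t ^ 2)
      ≤ l * ‖z‖ ^ 2 + (β - q) * t ^ 2 := by
  set μ := β - q - β * l / (l - β) * ‖c‖ ^ 2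
  have hμβ : μ ≤ β := by
    have : 0 ≤ β * l / (l - β) * ‖c‖ ^ 2 := by
      have := hβ.trans_lt hβl
      have := sub_pos.2 hβl
      positivity
    linarith
  have hweight : μ * l / (l - μ) ≤ β * l / (l - β) := by
    rw [div_le_div_iff₀ (by linarith) (by linarith)]
    nlinarith [mul_nonneg (sq_nonneg l) (sub_nonneg.2 hμβ)]
  have hyoung := mul_norm_sub_sq_le (hμβ.trans_lt hβl) z (t • c)
  rw [norm_smul, mul_pow, Real.norm_eq_abs, sq_abs] at hyoung
  calc μ * (‖z - t • c‖ ^ 2 + t ^ 2)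
      ≤ l * ‖z‖ ^ 2 + μ * l / (l - μ) * (t ^ 2 * ‖c‖ ^ 2) + μ * t ^ 2 := by linarith
    _ ≤ l * ‖z‖ ^ 2 + β * l / (l - β) * (t ^ 2 * ‖c‖ ^ 2) + μ * t ^ 2 := by gcongr
    _ = l * ‖z‖ ^ 2 + (β - q) * t ^ 2 := by ring

section QuadraticForms

variable {ι : Type*} [Fintype ι]

lemma sumElim_dotProduct_fromBlocks_mulVec (A : Matrix ι ι ℝ) (b y : ι → ℝ) (β t : ℝ) :
    Sum.elim y (fun _ => t) ⬝ᵥ fromBlocks A (of fun i (_ : Fin 1) => b i)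
        (of fun (_ : Fin 1) j => b j) (of fun _ _ => β) *ᵥ Sum.elim y (fun _ => t)
      = y ⬝ᵥ A *ᵥ y + 2 * t * (b ⬝ᵥ y) + β * t ^ 2 := by
  have hcol : (of fun i (_ : Fin 1) => b i) *ᵥ (fun _ => t) = t • b := by
    ext; simp [mulVec, dotProduct, mul_comm]
  have hrow : (of fun (_ : Fin 1) j => b j) *ᵥ y = fun _ => b ⬝ᵥ y := by
    ext; simp [mulVec]
  have hcorner : (of fun _ _ => β : Matrix (Fin 1) (Fin 1) ℝ) *ᵥ (fun _ => t) = fun _ => β * t := by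
    ext; simp [mulVec, dotProduct]
  rw [fromBlocks_mulVec, sumElim_dotProduct_sumElim]
  simp only [Sum.elim_comp_inl, Sum.elim_comp_inr, hcol, hrow, hcorner, dotProduct_add,
    dotProduct_smul, dotProduct_comm y b, smul_eq_mul]
  simp [dotProduct]
  ring

lemma Matrix.IsHermitian.add_smul_dotProduct_mulVec {A : Matrix ι ι ℝ} (hA : A.IsHermitian)
    (y c : ι → ℝ) (t : ℝ) :
    (y + t • c) ⬝ᵥ A *ᵥ (y + t • c)
      = y ⬝ᵥ A *ᵥ y + 2 * t * (A *ᵥ c ⬝ᵥ y) + t ^ 2 * (c ⬝ᵥ A *ᵥ c) := by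
  have hsymm : c ⬝ᵥ A *ᵥ y = A *ᵥ c ⬝ᵥ y := by
    rw [dotProduct_mulVec, ← mulVec_transpose, ← conjTranspose_eq_transpose_of_trivial, hA.eq]
  simp only [mulVec_add, mulVec_smul, add_dotProduct, dotProduct_add, smul_dotProduct,
    dotProduct_smul, hsymm, smul_eq_mul, dotProduct_comm y (A *ᵥ c)]
  ring

lemma le_sumElim_dotProduct_fromBlocks_mulVec {C D : Matrix ι ι ℝ} [DecidableEq ι]
    (hC : C.IsHermitian) (hdet : IsUnit C.det) (hD : D.PosSemidef) (b y : ι → ℝ) (β t : ℝ) :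
    (y + t • C⁻¹ *ᵥ b) ⬝ᵥ C *ᵥ (y + t • C⁻¹ *ᵥ b) + (β - b ⬝ᵥ C⁻¹ *ᵥ b) * t ^ 2
      ≤ Sum.elim y (fun _ => t) ⬝ᵥ fromBlocks (C + D) (of fun i (_ : Fin 1) => b i)
          (of fun (_ : Fin 1) j => b j) (of fun _ _ => β) *ᵥ Sum.elim y (fun _ => t) := by
  have hCc : C *ᵥ (C⁻¹ *ᵥ b) = b := by simp [mulVec_mulVec, mul_nonsing_inv _ hdet]
  have hD' : 0 ≤ y ⬝ᵥ D *ᵥ y := by simpa using hD.dotProduct_mulVec_nonneg y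
  rw [sumElim_dotProduct_fromBlocks_mulVec, hC.add_smul_dotProduct_mulVec, hCc,
    dotProduct_comm (C⁻¹ *ᵥ b) b, add_mulVec, dotProduct_add]
  linarith

end QuadraticForms

theorem stmt4_general (p : ℕ) (B : Matrix (Fin p ⊕ Fin 1) (Fin p ⊕ Fin 1) ℝ)
    (B11 C11 C12 : Matrix (Fin p) (Fin p) ℝ) (b : Fin p → ℝ) (β : ℝ)
    (hBdef : B = fromBlocks B11 (of fun i (_ : Fin 1) => b i)
      (of fun (_ : Fin 1) j => b j) (of fun _ _ => β))
    (hB : B.PosSemidef)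
    (hsplit : B11 = C11 + C12) (hC11 : C11.PosDef) (hgap : β < lmin C11)
    (hC12 : C12.PosSemidef) :
    lmin B ≥ β - b ⬝ᵥ (C11⁻¹ *ᵥ b)
      - β * enorm' (C11⁻¹ *ᵥ b) ^ 2 / (1 - β * specNorm C11⁻¹) := by
  have hβ : 0 ≤ β := by
    simpa [hBdef, sumElim_dotProduct_fromBlocks_mulVec] using
      hB.dotProduct_mulVec_nonneg (Sum.elim 0 fun _ => 1)
  have hdet : IsUnit C11.det := isUnit_iff_ne_zero.2 hC11.det_pos.ne'
  rw [hC11.specNorm_inv, enorm'_sq, ge_iff_le]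
  set l := lmin C11
  set c := C11⁻¹ *ᵥ b
  have hq : 0 ≤ b ⬝ᵥ c := by
    simpa [c, mulVec_mulVec, mul_nonsing_inv _ hdet, dotProduct_comm] using
      hC11.posSemidef.dotProduct_mulVec_nonneg c
  have hweight : β * (c ⬝ᵥ c) / (1 - β * l⁻¹) = β * l / (l - β) * (c ⬝ᵥ c) := by
    have := hβ.trans_lt hgap
    have := sub_pos.2 hgap
    field_simp
  rw [hweight]
  refine hB.1.le_lmin_of_forall fun x => ?_
  obtain ⟨y, t, rfl⟩ : ∃ y t, x = Sum.elim y (fun _ => t) :=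
    ⟨x ∘ Sum.inl, x (Sum.inr 0), by ext (i | i) <;> simp [Fin.fin_one_eq_zero]⟩
  have hscalar := mul_norm_sub_smul_sq_add_sq_le hβ hgap hq
    (WithLp.toLp 2 (y + t • c)) (WithLp.toLp 2 c) t
  simp only [← WithLp.toLp_smul, ← WithLp.toLp_sub, norm_toLp_sq_eq_dotProduct,
    add_sub_cancel_right] at hscalar
  calc _ = (β - b ⬝ᵥ c - β * l / (l - β) * (c ⬝ᵥ c)) * (y ⬝ᵥ y + t ^ 2) := by
        simp [dotProduct, sq]
    _ ≤ l * ((y + t • c) ⬝ᵥ (y + t • c)) + (β - b ⬝ᵥ c) * t ^ 2 := hscalar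
    _ ≤ (y + t • c) ⬝ᵥ C11 *ᵥ (y + t • c) + (β - b ⬝ᵥ c) * t ^ 2 := by
        gcongr
        exact hC11.1.lmin_mul_dotProduct_le _
    _ ≤ _ := hBdef ▸ hsplit ▸ le_sumElim_dotProduct_fromBlocks_mulVec hC11.1 hdet hC12 b y β t

theorem stmt4 (p : ℕ) (B : Matrix (Fin p ⊕ Fin 1) (Fin p ⊕ Fin 1) ℝ)
    (B11 C11 C12 : Matrix (Fin p) (Fin p) ℝ) (b : Fin p → ℝ) (β : ℝ)
    (hBdef : B = fromBlocks B11 (of fun i (_ : Fin 1) => b i)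
      (of fun (_ : Fin 1) j => b j) (of fun _ _ => β))
    (hB : B.PosSemidef) (hrank : p ≤ B.rank)
    (hsplit : B11 = C11 + C12) (hC11 : C11.PosDef) (hgap : β < lmin C11)
    (hC12 : C12.PosSemidef) :
    lmin B ≥ β - b ⬝ᵥ (C11⁻¹ *ᵥ b)
      - β * enorm' (C11⁻¹ *ᵥ b) ^ 2 / (1 - β * specNorm C11⁻¹) :=
  stmt4_general p B B11 C11 C12 b β hBdef hB hsplit hC11 hgap hC12
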